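/- arXiv:1409.7771 — 4 statements merged into one kernel-verified Lean document; each statement's English description precedes it below -/
import Mathlib

section
/- Let C be an assignment of k tokens to n nodes in which each token is held by exactly one node and no node holds more than one token (so k ≤ n). Let C* be the random assignment in which each node holds each token independently with probability 3/4. Consider the bipartite graph on two copies V₁, V₂ of the node set where v ∈ V₁ is joined to u ∈ V₂ iff every token that v holds in C is held by u in C*. Then with probability at least 1 - n·e^{-3n/200} - n·2^{-n/5} this bipartite graph has a perfect matching. -/
open MeasureTheory

/-- The product measure on `Fin n → Fin k → Bool` in which, independently for each
(node, token) pair, the node holds the token (`= true`) with probability `p`. -/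
noncomputable def tokenMeasure (n k : ℕ) (p : ENNReal) (hp : p ≤ 1) :
    Measure (Fin n → Fin k → Bool) :=
  Measure.pi fun _ => Measure.pi fun _ => (PMF.bernoulli p.toNNReal
    (by simpa using ENNReal.toNNReal_mono ENNReal.one_ne_top hp)).toMeasure

/-!
Take `c = ⌊n/2⌋`. Hall's condition holds as soon as every node misses fewer than `n - c` tokens
and every token is missed by at most `c` nodes: a set of at most `c` nodes is matched into the
more than `c` neighbours of any one of its members, and a larger set cannot avoid all holders of
a token, so its neighbourhood is everything. Each bad event asks for at least `n/2` misses among at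
most `n` independent trials with miss probability `1/4`, and the exponential moment bound
`P(#misses ≥ m) ≤ 3⁻ᵐ 𝔼[3 ^ #misses] = 3⁻ᵐ (3/2)ᴺ` makes it at most `(√3/2)ⁿ`, which lies below
both `e^{-3n/200}` and `2^{-n/5}`. A union bound over the `n` nodes and `k ≤ n` tokens concludes.
-/

open Finset Function ENNReal Real

theorem Finset.exists_injective_mem_of_lt_card_of_card_notMem_le {ι α : Type*} [Fintype ι]
    [Fintype α] [DecidableEq α] (hcard : Fintype.card ι ≤ Fintype.card α) (T : ι → Finset α)
    (c : ℕ) (hT : ∀ i, c < #(T i)) (hcompl : ∀ a, #{i | a ∉ T i} ≤ c) :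
    ∃ f : ι → α, Injective f ∧ ∀ i, f i ∈ T i := by
  refine (all_card_le_biUnion_card_iff_exists_injective T).mp fun s ↦ ?_
  by_cases hs : #s ≤ c
  · obtain rfl | ⟨i, hi⟩ := s.eq_empty_or_nonempty
    · simp
    · exact hs.trans ((hT i).le.trans (card_le_card (subset_biUnion_of_mem T hi)))
  · have hcover : s.biUnion T = univ := by
      refine eq_univ_of_forall fun a ↦ ?_
      have : ¬ s ⊆ ({i | a ∉ T i} : Finset ι) := fun h ↦ hs ((card_le_card h).trans (hcompl a))
      obtain ⟨i, hi, hai⟩ := not_subset.mp this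
      exact mem_biUnion.mpr ⟨i, hi, by simpa using hai⟩
    rw [hcover, card_univ]
    exact (card_le_univ s).trans hcard

theorem exists_perm_of_card_false_le {V K : Type*} [Fintype V] [DecidableEq V]
    [Fintype K] {o : K → V} (ho : Injective o) (ω : V → K → Bool) (c : ℕ)
    (hrow : ∀ u, #{t | ω u t = false} + c < Fintype.card V)
    (hcol : ∀ t, #{u | ω u t = false} ≤ c) :
    ∃ f : V ≃ V, ∀ u t, o t = f u → ω u t = true := by
  let T : V → Finset V := fun u ↦ {v | ∀ t, o t = v → ω u t = true}
  have hT : ∀ u, c < #(T u) := by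
    intro u
    have hmissing : #(T u)ᶜ ≤ #{t | ω u t = false} := by
      refine (card_le_card (t := ({t | ω u t = false} : Finset K).image o) fun v hv ↦ ?_).trans
        card_image_le
      simp only [T, mem_compl, mem_filter, mem_univ, true_and, not_forall, Bool.not_eq_true] at hv
      obtain ⟨t, rfl, ht⟩ := hv
      exact mem_image_of_mem o (by simpa using ht)
    have := card_compl_add_card (T u)
    have := hrow u
    omega
  have hcompl : ∀ v, #{u | v ∉ T u} ≤ c := by
    intro v
    by_cases hv : ∃ t, o t = v
    · obtain ⟨t, rfl⟩ := hv
      refine (card_le_card fun u hu ↦ ?_).trans (hcol t)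
      simp only [T, mem_filter, mem_univ, true_and, not_forall, Bool.not_eq_true] at hu ⊢
      obtain ⟨t', ht', hu⟩ := hu
      rwa [← ho ht']
    · push Not at hv
      simp [T, hv]
  obtain ⟨f, hf, hfT⟩ :=
    exists_injective_mem_of_lt_card_of_card_notMem_le le_rfl T c hT hcompl
  refine ⟨Equiv.ofBijective f hf.bijective_of_finite, fun u t hot ↦ ?_⟩
  simp only [T, mem_filter, mem_univ, true_and] at hfT
  exact hfT u t hot

theorem compl_setOf_exists_perm_subset {V K : Type*} [Fintype V] [DecidableEq V] [Fintype K]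
    {o : K → V} (ho : Injective o) :
    {ω : V → K → Bool | ∃ f : V ≃ V, ∀ u t, o t = f u → ω u t = true}ᶜ ⊆
      (⋃ u, {ω | Fintype.card V - Fintype.card V / 2 ≤ #{t | ω u t = false}}) ∪
        ⋃ t, {ω | Fintype.card V / 2 + 1 ≤ #{u | ω u t = false}} := by
  intro ω hω
  by_contra hgood
  simp only [Set.mem_union, Set.mem_iUnion, Set.mem_ofPred_eq, not_or, not_exists, not_le]
    at hgood
  exact hω (exists_perm_of_card_false_le ho ω (Fintype.card V / 2)
    (fun u ↦ by have := hgood.1 u; omega) (fun t ↦ Nat.lt_succ_iff.mp (hgood.2 t)))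

theorem MeasureTheory.Measure.pi_setOf_le_card_false_mul_pow_le {ι : Type*} [Fintype ι]
    (ν : Measure Bool) [IsFiniteMeasure ν] {r : ℝ≥0∞} (hr : 1 ≤ r) (m : ℕ) :
    Measure.pi (fun _ : ι ↦ ν) {x | m ≤ #{i | x i = false}} * r ^ m ≤
      (ν {true} + r * ν {false}) ^ Fintype.card ι := by
  classical
  set S : Finset (ι → Bool) := {x | m ≤ #{i | x i = false}}
  have weight : ∀ x : ι → Bool, r ^ #{i | x i = false} = ∏ i, if x i then 1 else r := by
    intro x
    rw [← prod_const, prod_filter]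
    exact prod_congr rfl fun i _ ↦ by cases x i <;> simp
  calc Measure.pi (fun _ : ι ↦ ν) {x | m ≤ #{i | x i = false}} * r ^ m
      = ∑ x ∈ S, (∏ i, ν {x i}) * r ^ m := by
        rw [← coe_filter_univ, ← sum_measure_singleton, sum_mul]
        simp [S]
    _ ≤ ∑ x ∈ S, (∏ i, ν {x i}) * r ^ #{i | x i = false} :=
        sum_le_sum fun x hx ↦ mul_le_mul_right (pow_le_pow_right₀ hr (mem_filter.mp hx).2) _
    _ ≤ ∑ x : ι → Bool, ∏ i, ν {x i} * (if x i then 1 else r) := by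
        refine (sum_le_sum_of_subset (subset_univ S)).trans_eq (Finset.sum_congr rfl fun x _ ↦ ?_)
        rw [weight, prod_mul_distrib]
    _ = (ν {true} + r * ν {false}) ^ Fintype.card ι := by
        rw [← Fintype.prod_sum (fun _ b ↦ ν {b} * if b then 1 else r), prod_const, Fintype.sum_bool]
        simp [mul_comm]

theorem three_halves_pow_div_three_pow_le {N m n : ℕ} (hN : N ≤ n) (hm : n ≤ 2 * m) :
    (3 / 2 : ℝ) ^ N / 3 ^ m ≤ (√3 / 2) ^ n := by
  refine (pow_le_pow_iff_left₀ (by positivity) (by positivity) two_ne_zero).mp ?_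
  calc ((3 / 2 : ℝ) ^ N / 3 ^ m) ^ 2 = (9 / 4) ^ N / 3 ^ (2 * m) := by
        rw [div_pow, ← pow_mul, ← pow_mul, mul_comm, mul_comm m, pow_mul]; norm_num
    _ ≤ (9 / 4) ^ n / 3 ^ n := by gcongr <;> norm_num
    _ = ((√3 / 2) ^ n) ^ 2 := by
        rw [← pow_mul, mul_comm, pow_mul, div_pow √3, sq_sqrt (by norm_num), ← div_pow]
        norm_num

theorem sqrt_three_div_two_pow_le_exp (n : ℕ) : (√3 / 2) ^ n ≤ exp (-(3 * n) / 200) := by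
  rw [show -(3 * (n : ℝ)) / 200 = n * (-3 / 200) by ring, exp_nat_mul]
  gcongr
  refine (pow_le_pow_iff_left₀ (by positivity) (by positivity) two_ne_zero).mp ?_
  rw [div_pow, sq_sqrt (by norm_num), ← exp_nat_mul]
  linarith [add_one_le_exp ((2 : ℕ) * (-3 / 200 : ℝ))]

theorem sqrt_three_div_two_pow_le_two_rpow (n : ℕ) :
    (√3 / 2) ^ n ≤ (2 : ℝ) ^ (-(n : ℝ) / 5) := by
  rw [show -(n : ℝ) / 5 = (-1 / 5) * n by ring, Real.rpow_mul_natCast (by norm_num)]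
  gcongr
  refine (pow_le_pow_iff_left₀ (by positivity) (by positivity) (by norm_num : 10 ≠ 0)).mp ?_
  rw [← Real.rpow_mul_natCast (by norm_num), div_pow, show (10 : ℕ) = 2 * 5 from rfl, pow_mul,
    sq_sqrt (by norm_num)]
  norm_num

noncomputable abbrev bernoulliBool (p : ℝ≥0∞) (hp : p ≤ 1) : Measure Bool :=
  (PMF.bernoulli p.toNNReal (by simpa using ENNReal.toNNReal_mono ENNReal.one_ne_top hp)).toMeasure

theorem bernoulliBool_true {p : ℝ≥0∞} (hp : p ≤ 1) : bernoulliBool p hp {true} = p := by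
  simp [PMF.bernoulli, coe_toNNReal (ne_top_of_le_ne_top one_ne_top hp)]

theorem bernoulliBool_false {p : ℝ≥0∞} (hp : p ≤ 1) :
    bernoulliBool p hp {false} = 1 - p := by
  simp [PMF.bernoulli, coe_toNNReal (ne_top_of_le_ne_top one_ne_top hp)]

theorem three_div_four_le_one : (3 / 4 : ℝ≥0∞) ≤ 1 := ENNReal.div_le_of_le_mul (by norm_num)

theorem bernoulliBool_pi_setOf_le_card_false_le {ι : Type*} [Fintype ι] {n m : ℕ}
    (hι : Fintype.card ι ≤ n) (hm : n ≤ 2 * m) :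
    Measure.pi (fun _ : ι ↦ bernoulliBool (3 / 4) three_div_four_le_one)
      {x | m ≤ #{i | x i = false}} ≤ ENNReal.ofReal ((√3 / 2) ^ n) := by
  have hmoment := Measure.pi_setOf_le_card_false_mul_pow_le (ι := ι)
    (bernoulliBool (3 / 4) three_div_four_le_one) (r := 3) (by norm_num) m
  have hmean : (3 / 4 : ℝ≥0∞) + 3 * (1 - 3 / 4) = 3 / 2 := by
    rw [← toReal_eq_toReal_iff' (by finiteness) (by finiteness), toReal_add (by finiteness)
      (by finiteness), toReal_mul, toReal_sub_of_le three_div_four_le_one (by simp)]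
    norm_num
  rw [bernoulliBool_true, bernoulliBool_false, hmean,
    ← ENNReal.le_div_iff_mul_le (by simp) (by simp)] at hmoment
  refine hmoment.trans_eq ?_ |>.trans (ofReal_le_ofReal (three_halves_pow_div_three_pow_le hι hm))
  rw [ofReal_div_of_pos (by positivity), ofReal_pow (by norm_num), ofReal_pow (by norm_num),
    ofReal_div_of_pos (by norm_num)]
  norm_num

section tokenMeasure

variable {n k : ℕ} {p : ℝ≥0∞} (hp : p ≤ 1)

instance : IsProbabilityMeasure (tokenMeasure n k p hp) := by
  unfold tokenMeasure
  infer_instance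

theorem measurePreserving_tokenMeasure_row (u : Fin n) :
    MeasurePreserving (fun ω : Fin n → Fin k → Bool ↦ ω u) (tokenMeasure n k p hp)
      (Measure.pi fun _ ↦ bernoulliBool p hp) :=
  measurePreserving_eval _ u

theorem measurePreserving_tokenMeasure_column (t : Fin k) :
    MeasurePreserving (fun (ω : Fin n → Fin k → Bool) v ↦ ω v t) (tokenMeasure n k p hp)
      (Measure.pi fun _ ↦ bernoulliBool p hp) :=
  measurePreserving_pi _ _ fun _ ↦ measurePreserving_eval _ t

end tokenMeasure

theorem tokenMeasure_row_le {n k m : ℕ} (hk : k ≤ n) (hm : n ≤ 2 * m) (u : Fin n) :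
    tokenMeasure n k (3 / 4) three_div_four_le_one {ω | m ≤ #{t | ω u t = false}} ≤
      ENNReal.ofReal ((√3 / 2) ^ n) :=
  ((measurePreserving_tokenMeasure_row _ u).measure_preimage
    MeasurableSet.of_discrete.nullMeasurableSet).trans_le
    (bernoulliBool_pi_setOf_le_card_false_le (by simpa using hk) hm)

theorem tokenMeasure_column_le {n k m : ℕ} (hm : n ≤ 2 * m) (t : Fin k) :
    tokenMeasure n k (3 / 4) three_div_four_le_one {ω | m ≤ #{u | ω u t = false}} ≤
      ENNReal.ofReal ((√3 / 2) ^ n) :=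
  ((measurePreserving_tokenMeasure_column _ t).measure_preimage
    MeasurableSet.of_discrete.nullMeasurableSet).trans_le
    (bernoulliBool_pi_setOf_le_card_false_le (by simp) hm)

theorem MeasureTheory.ofReal_one_sub_le_of_measure_compl_le {Ω : Type*} [MeasurableSpace Ω]
    {μ : Measure Ω} [IsProbabilityMeasure μ] {s : Set Ω} (hs : MeasurableSet s) {ε : ℝ}
    (hε : 0 ≤ ε) (h : μ sᶜ ≤ ENNReal.ofReal ε) : ENNReal.ofReal (1 - ε) ≤ μ s := by
  rw [ofReal_sub _ hε, ofReal_one, ← compl_compl s, prob_compl_eq_one_sub hs.compl]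
  exact tsub_le_tsub_left h 1

/-- Let `C` be an assignment in which token `t` is held exactly by
node `o t`, with `o` injective (each token at exactly one node, no node holding more
than one token, so `k ≤ n`).  Let `C*` be the random assignment `ω` where each node
holds each token independently with probability `3/4`.  In the bipartite graph on
two copies of the node set where `v ∈ V₁` is joined to `u ∈ V₂` iff every token `v`
holds in `C` is held by `u` in `C*`, a perfect matching (a bijection `f : V₂ ≃ V₁`
with `u` joined to `f u`) exists with probability at least
`1 - n·e^{-3n/200} - n·2^{-n/5}`. -/
theorem stmt_4 (n k : ℕ) (o : Fin k → Fin n) (ho : Function.Injective o) :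
    ENNReal.ofReal (1 - n * Real.exp (-(3 * (n : ℝ)) / 200) - n * (2 : ℝ) ^ (-(n : ℝ) / 5)) ≤
      tokenMeasure n k (3/4) (by exact ENNReal.div_le_of_le_mul (by norm_num))
        {ω | ∃ f : Fin n ≃ Fin n, ∀ (u : Fin n) (t : Fin k), o t = f u → ω u t = true} := by
  have hk : k ≤ n := by simpa using Fintype.card_le_of_injective o ho
  rw [sub_sub]
  refine ofReal_one_sub_le_of_measure_compl_le MeasurableSet.of_discrete (by positivity) ?_
  refine (measure_mono (compl_setOf_exists_perm_subset ho)).trans <|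
    (measure_union_le _ _).trans <|
      (add_le_add (measure_iUnion_fintype_le _ _) (measure_iUnion_fintype_le _ _)).trans ?_
  simp only [Fintype.card_fin]
  calc _ ≤ ∑ _u : Fin n, ENNReal.ofReal (exp (-(3 * n) / 200)) +
          ∑ _t : Fin k, ENNReal.ofReal (2 ^ (-(n : ℝ) / 5)) := by
        gcongr with u _ t _
        · exact (tokenMeasure_row_le hk (by omega) u).trans
            (ofReal_le_ofReal (sqrt_three_div_two_pow_le_exp n))
        · exact (tokenMeasure_column_le (by omega) t).trans
            (ofReal_le_ofReal (sqrt_three_div_two_pow_le_two_rpow n))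
    _ ≤ ENNReal.ofReal (n * exp (-(3 * n) / 200) + n * 2 ^ (-(n : ℝ) / 5)) := by
        simp only [sum_const, card_univ, Fintype.card_fin, nsmul_eq_mul]
        rw [ofReal_add (by positivity) (by positivity), ofReal_mul (by positivity),
          ofReal_mul (by positivity), ofReal_natCast]
        gcongr
end

section
/- Let X be a random variable over [k]^d whose distribution α-fools combinatorial rectangles: for every rectangle R = R₁ × ⋯ × R_d ⊆ [k]^d, |Pr[X ∈ R] − |R|/k^d| ≤ α. Let D ⊆ [k] be nonempty, let j ∈ D, and set d = ⌈k·log(3k/ε)⌉ and α = ε/(3kd). Then the probability that j appears in a coordinate of X before any other element of D (i.e., X ∈ ⋃_{0≤t<d} ([k]\D)^t × {j} × [k]^{d−t−1}) is at least 1/|D| − 2ε/(3k). -/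
/-!
The event "`j` is the first letter of `D` in `x`" is the disjoint union over `t < d` of the
rectangles `(Dᶜ)^t × {j} × [k]^(d-t-1)`, of volumes `(1 - |D|/k)^t / k`. Summing the
geometric series gives `(1 - (1 - |D|/k)^d) / |D|`, and `(1 - |D|/k)^d ≤ exp(-d/k) ≤ ε/(3k)`
by the choice of `d`. Fooling costs at most `α` per rectangle, hence `dα ≤ ε/(3k)` in total.
-/

open MeasureTheory Finset

theorem Fin.prod_ite_lt_ite_eq {M : Type*} [CommMonoid M] {d : ℕ} (t : Fin d) (a b : M) :
    ∏ i : Fin d, (if i < t then a else if i = t then b else 1) = a ^ (t : ℕ) * b := by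
  rw [prod_ite, Finset.prod_const, prod_ite_eq']
  simp [Finset.filter_gt_eq_Iio]

theorem pairwise_disjoint_firstHit {β : Type*} {d : ℕ} {D : Set β} {j : β} (hj : j ∈ D) :
    Pairwise (Function.onFun Disjoint
      fun t : Fin d => {x : Fin d → β | x t = j ∧ ∀ s < t, x s ∉ D}) := by
  intro t s hts
  refine Set.disjoint_left.2 fun x ⟨hxt, hDt⟩ ⟨hxs, hDs⟩ => ?_
  rcases hts.lt_or_gt with h | h
  · exact hDs t h (hxt ▸ hj)
  · exact hDt s h (hxs ▸ hj)

section FirstHit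

variable {β : Type*} [Fintype β] [DecidableEq β] {d : ℕ}

def firstHitRect (D : Finset β) (j : β) (t : Fin d) (i : Fin d) : Finset β :=
  if i < t then Dᶜ else if i = t then {j} else univ

theorem prod_card_firstHitRect_div (D : Finset β) (j : β) (t : Fin d) :
    (∏ i, ((firstHitRect D j t i).card : ℝ)) / (Fintype.card β : ℝ) ^ d
      = (1 - D.card / Fintype.card β) ^ (t : ℕ) / Fintype.card β := by
  have hn : (Fintype.card β : ℝ) ≠ 0 := by
    simp [Fintype.card_pos_iff.2 ⟨j⟩ |>.ne']
  calc (∏ i, ((firstHitRect D j t i).card : ℝ)) / (Fintype.card β : ℝ) ^ d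
      = ∏ i, ((firstHitRect D j t i).card : ℝ) / Fintype.card β := by
        rw [prod_div_distrib, Finset.prod_const, card_univ, Fintype.card_fin]
    _ = ∏ i : Fin d, (if i < t then 1 - (D.card : ℝ) / Fintype.card β
          else if i = t then 1 / (Fintype.card β : ℝ) else 1) := by
        refine prod_congr rfl fun i _ => ?_
        unfold firstHitRect
        split_ifs
        · rw [card_compl, Nat.cast_sub (card_le_univ D)]
          field_simp
        · simp
        · simp [hn]
    _ = _ := by rw [Fin.prod_ite_lt_ite_eq, mul_one_div]

theorem forall_mem_firstHitRect_iff {D : Finset β} {j : β} {t : Fin d} {x : Fin d → β} :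
    (∀ i, x i ∈ firstHitRect D j t i) ↔ x t = j ∧ ∀ s < t, x s ∉ D := by
  refine ⟨fun h => ⟨by simpa [firstHitRect] using h t, fun s hs => by
    simpa [firstHitRect, hs] using h s⟩, fun ⟨hjt, hD⟩ i => ?_⟩
  rcases lt_trichotomy i t with h | rfl | h
  · simp [firstHitRect, h, hD i h]
  · simp [firstHitRect, hjt]
  · simp [firstHitRect, h.ne', h.not_gt]

theorem measure_firstHit_eq_sum [MeasurableSpace β] [MeasurableSingletonClass β]
    (μ : Measure (Fin d → β)) {D : Finset β} {j : β} (hj : j ∈ D) :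
    μ {x | ∃ t, x t = j ∧ ∀ s < t, x s ∉ D}
      = ∑ t, μ {x | ∀ i, x i ∈ firstHitRect D j t i} := by
  simp_rw [forall_mem_firstHitRect_iff, Set.ofPred_exists]
  rw [← tsum_fintype (L := .unconditional _)]
  exact measure_iUnion (pairwise_disjoint_firstHit hj) fun _ => (Set.toFinite _).measurableSet

end FirstHit

theorem sum_pow_one_sub_div_div {c n : ℝ} (hc : c ≠ 0) (hn : n ≠ 0) (d : ℕ) :
    ∑ t : Fin d, (1 - c / n) ^ (t : ℕ) / n = (1 - (1 - c / n) ^ d) / c := by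
  have hr : 1 - c / n ≠ 1 := fun h => div_ne_zero hc hn (sub_eq_self.1 h)
  rw [← sum_div, Fin.sum_univ_eq_sum_range (fun t => (1 - c / n) ^ t), geom_sum_eq hr,
    sub_sub_cancel_left]
  field_simp
  ring

theorem one_sub_div_pow_le_inv {c n x : ℝ} {d : ℕ} (hc : 1 ≤ c) (hcn : c ≤ n) (hx : 0 < x)
    (hd : n * Real.log x ≤ d) : (1 - c / n) ^ d ≤ x⁻¹ := by
  have hn : 0 < n := by linarith
  have hstep : 1 - c / n ≤ Real.exp (-1 / n) := by
    have := div_le_div_of_nonneg_right hc hn.le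
    linarith [Real.add_one_le_exp (-1 / n), neg_div n 1]
  calc (1 - c / n) ^ d ≤ Real.exp (-1 / n) ^ d :=
        pow_le_pow_left₀ (by rw [sub_nonneg, div_le_one hn]; exact hcn) hstep d
    _ = Real.exp (-(d / n)) := by rw [← Real.exp_nat_mul]; ring_nf
    _ ≤ Real.exp (-Real.log x) :=
        Real.exp_le_exp.2 (neg_le_neg ((le_div_iff₀ hn).2 (by linarith)))
    _ = x⁻¹ := by rw [Real.exp_neg, Real.exp_log hx]

theorem stmt_8_general (k : ℕ) (ε : ℝ) (hε : 0 < ε)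
    (d : ℕ) (hd : d = ⌈(k : ℝ) * Real.log (3 * k / ε)⌉₊)
    (α : ℝ) (hα : α = ε / (3 * k * d))
    (μ : Measure (Fin d → Fin k)) [IsProbabilityMeasure μ]
    (hfool : ∀ R : Fin d → Finset (Fin k),
      |(μ {x | ∀ i, x i ∈ R i}).toReal - (∏ i, ((R i).card : ℝ)) / (k : ℝ) ^ d| ≤ α)
    (D : Finset (Fin k)) (j : Fin k) (hj : j ∈ D) :
    ENNReal.ofReal (1 / (D.card : ℝ) - 2 * ε / (3 * k)) ≤
      μ {x | ∃ t : Fin d, x t = j ∧ ∀ s, s < t → x s ∉ D} := by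
  have hk : (0 : ℝ) < k := by exact_mod_cast j.pos
  have hc : (1 : ℝ) ≤ D.card := by exact_mod_cast card_pos.2 ⟨j, hj⟩
  have hck : (D.card : ℝ) ≤ k := by
    exact_mod_cast (card_le_univ D).trans_eq (Fintype.card_fin k)
  set r := 1 - (D.card : ℝ) / k
  have hrect (t : Fin d) :
      r ^ (t : ℕ) / k - α ≤ (μ {x | ∀ i, x i ∈ firstHitRect D j t i}).toReal := by
    have hvol := prod_card_firstHitRect_div D j t
    rw [Fintype.card_fin] at hvol
    linarith [(abs_le.1 (hfool (firstHitRect D j t))).1]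
  have htail : r ^ d ≤ ε / (3 * k) := by
    rw [← inv_div]
    exact one_sub_div_pow_le_inv hc hck (by positivity) (hd ▸ Nat.le_ceil _)
  have hdα : d * α ≤ ε / (3 * k) :=
    calc d * α = ε / (3 * k) * (d / d) := by rw [hα]; ring
      _ ≤ ε / (3 * k) := mul_le_of_le_one_right (by positivity) (div_self_le_one _)
  rw [ENNReal.ofReal_le_iff_le_toReal (measure_ne_top μ _), measure_firstHit_eq_sum μ hj,
    ENNReal.toReal_sum fun t _ => measure_ne_top μ _]
  calc 1 / (D.card : ℝ) - 2 * ε / (3 * k) ≤ (1 - r ^ d) / D.card - d * α := by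
        have : r ^ d / D.card ≤ r ^ d :=
          div_le_self (pow_nonneg (by simp [r, div_le_one hk, hck]) d) hc
        rw [sub_div]
        linarith [show 2 * ε / (3 * k) = ε / (3 * k) + ε / (3 * k) by ring]
    _ = ∑ t : Fin d, (r ^ (t : ℕ) / k - α) := by
        rw [sum_sub_distrib, sum_pow_one_sub_div_div (by positivity) hk.ne', sum_const, card_univ,
          Fintype.card_fin, nsmul_eq_mul]
    _ ≤ _ := sum_le_sum fun t _ => hrect t

/-- Let `X` be a random variable over `[k]^d` (distribution `μ`)
which `α`-fools combinatorial rectangles: for every rectangle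
`R = R₁ × ⋯ × R_d ⊆ [k]^d`, `|Pr[X ∈ R] − |R|/k^d| ≤ α`.  Let `D ⊆ [k]` be
nonempty, `j ∈ D`, and set `d = ⌈k·log(3k/ε)⌉`, `α = ε/(3kd)`.  Then the
probability that `j` appears in a coordinate of `X` before any other element of `D`
is at least `1/|D| − 2ε/(3k)`. -/
theorem stmt_8 (k : ℕ) (hk : 0 < k) (ε : ℝ) (hε : 0 < ε) (hεk : ε ≤ k)
    (d : ℕ) (hd : d = ⌈(k : ℝ) * Real.log (3 * k / ε)⌉₊)
    (α : ℝ) (hα : α = ε / (3 * k * d))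
    (μ : Measure (Fin d → Fin k)) [IsProbabilityMeasure μ]
    (hfool : ∀ R : Fin d → Finset (Fin k),
      |(μ {x | ∀ i, x i ∈ R i}).toReal - (∏ i, ((R i).card : ℝ)) / (k : ℝ) ^ d| ≤ α)
    (D : Finset (Fin k)) (hD : D.Nonempty) (j : Fin k) (hj : j ∈ D) :
    ENNReal.ofReal (1 / (D.card : ℝ) - 2 * ε / (3 * k)) ≤
      μ {x | ∃ t : Fin d, x t = j ∧ ∀ s, s < t → x s ∉ D} :=
  stmt_8_general k ε hε d hd α hα μ hfool D j hj
end

section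
/- In the evolution graph over ℓ rounds, if P is a set of edge-disjoint directed paths from source copies at level 0 to sink copies at level ℓ such that for each sink node v and each token i there is a distinct path in P from a source holding token i to v, then there exists a feasible ℓ-round token-forwarding schedule (each node sending at most one token per edge per round) after which every sink node holds all k tokens. -/
/-!
Route every token along its own path: in round `r + 1` a node `u` sends to `w` the token of
the path that uses the transmit edge `(u_r, w_{r+1})`, if any. Edge-disjointness makes this
choice unambiguous, so each path's token is in fact sent along each of its transmit edges, and
induction on the level shows that the token of a path is held by the path's node at every
level; in particular the sender always holds what it sends.
-/

open Classical in
/-- Holdings of tokens under a token-forwarding schedule `send` on the dynamic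
network `G`: `send r u v = some t` means `u` sends token `t` to `v` along the edge
`(u,v)` of `G r` in round `r+1` (at most one token per edge per round); a node
gains a token only if the sender actually holds it. -/
noncomputable def schedRun {V : Type*} (k : ℕ) (G : ℕ → SimpleGraph V)
    (init : V → Finset (Fin k)) (send : ℕ → V → V → Option (Fin k)) :
    ℕ → V → Finset (Fin k)
  | 0 => init
  | r + 1 => fun v =>
      schedRun k G init send r v ∪
        Finset.univ.filter fun t =>
          ∃ u, (G r).Adj u v ∧ send r u v = some t ∧ t ∈ schedRun k G init send r u

section EvolutionPaths

variable {V ι : Type*} {k : ℕ}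

theorem mem_schedRun_succ {G : ℕ → SimpleGraph V} {init : V → Finset (Fin k)}
    {send : ℕ → V → V → Option (Fin k)} {r : ℕ} {v : V} {t : Fin k} :
    t ∈ schedRun k G init send (r + 1) v ↔ t ∈ schedRun k G init send r v ∨
      ∃ u, (G r).Adj u v ∧ send r u v = some t ∧ t ∈ schedRun k G init send r u := by
  simp [schedRun]

/-- A path in the evolution graph of `G 0, …, G (ℓ - 1)`, as its node at each level. -/
def IsEvolutionPath (G : ℕ → SimpleGraph V) (ℓ : ℕ) (γ : ℕ → V) : Prop :=
  ∀ r < ℓ, γ (r + 1) = γ r ∨ (G r).Adj (γ r) (γ (r + 1))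

/-- `γ` uses the transmit edge `(u_r, w_{r+1})`. -/
def TransmitsAt (γ : ℕ → V) (r : ℕ) (u w : V) : Prop :=
  γ r = u ∧ γ (r + 1) = w ∧ u ≠ w

theorem IsEvolutionPath.adj_of_transmitsAt {G : ℕ → SimpleGraph V} {ℓ r : ℕ} {γ : ℕ → V}
    {u w : V} (hγ : IsEvolutionPath G ℓ γ) (hr : r < ℓ) (h : TransmitsAt γ r u w) :
    (G r).Adj u w := by
  obtain ⟨rfl, rfl, hne⟩ := h
  exact (hγ r hr).resolve_left hne.symm

section PathSchedule

variable (ℓ : ℕ) (tok : ι → Fin k) (q : ι → ℕ → V)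

open Classical in
noncomputable def pathSchedule (r : ℕ) (u w : V) : Option (Fin k) :=
  if h : ∃ a, r < ℓ ∧ TransmitsAt (q a) r u w then some (tok h.choose) else none

/-- Weaker than edge-disjointness: paths with different tokens may not share a transmit edge. -/
def SharedTransmitsAgree : Prop :=
  ∀ a b r u w, r < ℓ → TransmitsAt (q a) r u w → TransmitsAt (q b) r u w → tok a = tok b

variable {ℓ tok q}

theorem exists_of_pathSchedule_eq_some {r : ℕ} {u w : V} {t : Fin k}
    (h : pathSchedule ℓ tok q r u w = some t) :
    ∃ a, r < ℓ ∧ TransmitsAt (q a) r u w ∧ tok a = t := by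
  unfold pathSchedule at h
  split_ifs at h with hex
  exact ⟨hex.choose, hex.choose_spec.1, hex.choose_spec.2, Option.some_injective _ h⟩

theorem pathSchedule_eq_some
    (hcompat : SharedTransmitsAgree ℓ tok q)
    {a : ι} {r : ℕ} {u w : V} (hr : r < ℓ) (h : TransmitsAt (q a) r u w) :
    pathSchedule ℓ tok q r u w = some (tok a) := by
  have hex : ∃ b, r < ℓ ∧ TransmitsAt (q b) r u w := ⟨a, hr, h⟩
  rw [pathSchedule, dif_pos hex, hcompat _ _ r u w hr hex.choose_spec.2 h]

variable {G : ℕ → SimpleGraph V} {init : V → Finset (Fin k)}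

theorem tok_mem_schedRun_pathSchedule (hstart : ∀ a, tok a ∈ init (q a 0))
    (hpath : ∀ a, IsEvolutionPath G ℓ (q a))
    (hcompat : SharedTransmitsAgree ℓ tok q) :
    ∀ r ≤ ℓ, ∀ a, tok a ∈ schedRun k G init (pathSchedule ℓ tok q) r (q a r) := by
  intro r
  induction r with
  | zero => exact fun _ ↦ hstart
  | succ r ih =>
    intro hr a
    have hr : r < ℓ := hr
    rw [mem_schedRun_succ]
    rcases hpath a r hr with hbuffer | hadj
    · exact .inl (hbuffer ▸ ih hr.le a)
    · have htrans : TransmitsAt (q a) r (q a r) (q a (r + 1)) := ⟨rfl, rfl, hadj.ne⟩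
      exact .inr ⟨q a r, hadj, pathSchedule_eq_some hcompat hr htrans, ih hr.le a⟩

theorem pathSchedule_feasible (hstart : ∀ a, tok a ∈ init (q a 0))
    (hpath : ∀ a, IsEvolutionPath G ℓ (q a))
    (hcompat : SharedTransmitsAgree ℓ tok q)
    {r : ℕ} {u w : V} {t : Fin k} (h : pathSchedule ℓ tok q r u w = some t) :
    (G r).Adj u w ∧ t ∈ schedRun k G init (pathSchedule ℓ tok q) r u := by
  obtain ⟨a, hr, htrans, rfl⟩ := exists_of_pathSchedule_eq_some h
  refine ⟨(hpath a).adj_of_transmitsAt hr htrans, ?_⟩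
  rw [← htrans.1]
  exact tok_mem_schedRun_pathSchedule hstart hpath hcompat r hr.le a

end PathSchedule

end EvolutionPaths

/-- Evolution graph paths yield a schedule.  The evolution graph
of `G 0, …, G (ℓ-1)` has a copy of each node at each level `0, …, ℓ`; buffer edges
keep a node at the same vertex between consecutive levels and transmit edges
`(u_r, v_{r+1})` exist when `(G r).Adj u v`.  A path from level `0` to level `ℓ` is
described by its node at each level, `p v i : ℕ → V`.  If for each sink `v ∈ T` and
each token `i` there is a path `p v i` starting at a node holding `i`, ending at
`v`, moving along buffer or transmit edges, and these paths are pairwise disjoint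
on transmit edges, then there is a feasible `ℓ`-round schedule (each node sending
at most one token per edge per round, senders holding what they send) after which
every sink holds all `k` tokens. -/
theorem stmt_11 {V : Type*} (k ℓ : ℕ) (G : ℕ → SimpleGraph V)
    (init : V → Finset (Fin k)) (T : Finset V) (p : V → Fin k → ℕ → V)
    (hstart : ∀ v ∈ T, ∀ i : Fin k, i ∈ init (p v i 0))
    (hend : ∀ v ∈ T, ∀ i : Fin k, p v i ℓ = v)
    (hstep : ∀ v ∈ T, ∀ i : Fin k, ∀ r < ℓ,
      p v i (r + 1) = p v i r ∨ (G r).Adj (p v i r) (p v i (r + 1)))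
    (hdisj : ∀ v ∈ T, ∀ w ∈ T, ∀ i j : Fin k, (v, i) ≠ (w, j) → ∀ r < ℓ,
      ¬(p v i r ≠ p v i (r + 1) ∧ p v i r = p w j r ∧ p v i (r + 1) = p w j (r + 1))) :
    ∃ send : ℕ → V → V → Option (Fin k),
      (∀ r u w t, send r u w = some t → (G r).Adj u w ∧ t ∈ schedRun k G init send r u) ∧
      ∀ v ∈ T, ∀ i : Fin k, i ∈ schedRun k G init send ℓ v := by
  let q : T × Fin k → ℕ → V := fun a ↦ p a.1 a.2
  have hstart' : ∀ a : T × Fin k, a.2 ∈ init (q a 0) := fun a ↦ hstart a.1 a.1.2 a.2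
  have hpath : ∀ a, IsEvolutionPath G ℓ (q a) := fun a ↦ hstep a.1 a.1.2 a.2
  have hcompat : SharedTransmitsAgree ℓ Prod.snd q := by
    rintro ⟨⟨v, hv⟩, i⟩ ⟨⟨w, hw⟩, j⟩ r u u' hr ⟨rfl, rfl, hne⟩ ⟨hu, hu', -⟩
    by_contra hij
    exact hdisj v hv w hw i j (by simp [hij]) r hr ⟨hne, hu.symm, hu'.symm⟩
  refine ⟨pathSchedule ℓ Prod.snd q,
    fun r u w t h ↦ pathSchedule_feasible hstart' hpath hcompat h, fun v hv i ↦ ?_⟩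
  simpa [q, hend v hv i] using
    tok_mem_schedRun_pathSchedule hstart' hpath hcompat ℓ le_rfl (⟨v, hv⟩, i)
end

section
/- Suppose in each round colored 'blue' there are r groups (maximal sets of nodes holding identical token sets), the total number of missing (node, token) pairs is at most (n+k)·r, and each blue round makes at least c·r/log k units of progress (token receipts) for a fixed constant c > 0. If blue rounds are partitioned into at most log₂ n classes by label r ∈ [s/2^i, s/2^{i−1}) with labels non-increasing over time, then each class contains at most O((n+k)·(log k)/c) blue rounds, so the total number of blue rounds is O((n+k)·log n·log k). -/
/-!
Group the blue rounds by `Nat.log 2` of their label. In class `i` every round has label in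
`[2^i, 2^(i+1))`, so it makes progress at least `c·2^i/log k`, while the progress of all rounds
from the first round of the class on telescopes to at most the number of missing pairs at that
round, `(n+k)·2^(i+1)`. Hence a class has at most `2(n+k)·log k/c` rounds, and the labels being
at most `n`, there are at most `log₂ n + 1` classes.
-/

open Finset

lemma sum_sub_succ_le_of_antitone {M : ℕ → ℝ} (hM : Antitone M) (hM0 : 0 ≤ M)
    {S : Finset ℕ} {a : ℕ} (ha : ∀ t ∈ S, a ≤ t) :
    ∑ t ∈ S, (M t - M (t + 1)) ≤ M a := by
  obtain ⟨b, hSb⟩ := S.exists_nat_subset_range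
  have hS : S ⊆ Ico a (max a b) := fun t ht =>
    mem_Ico.mpr ⟨ha t ht, lt_max_of_lt_right (mem_range.mp (hSb ht))⟩
  have htelescope : ∑ t ∈ Ico a (max a b), (M t - M (t + 1)) = M a - M (max a b) := by
    simpa only [neg_sub_neg] using sum_Ico_sub (fun t => -M t) (le_max_left a b)
  calc ∑ t ∈ S, (M t - M (t + 1))
      ≤ ∑ t ∈ Ico a (max a b), (M t - M (t + 1)) :=
        sum_le_sum_of_subset_of_nonneg hS fun t _ _ => sub_nonneg.mpr (hM t.le_succ)
    _ = M a - M (max a b) := htelescope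
    _ ≤ M a := sub_le_self _ (hM0 _)

lemma card_mul_le_of_le_sub_succ {M : ℕ → ℝ} (hM : Antitone M) (hM0 : 0 ≤ M)
    {S : Finset ℕ} {a : ℕ} (ha : ∀ t ∈ S, a ≤ t) {δ : ℝ} (hδ : ∀ t ∈ S, δ ≤ M t - M (t + 1)) :
    #S * δ ≤ M a := by
  simpa only [nsmul_eq_mul] using (card_nsmul_le_sum S _ δ hδ).trans
    (sum_sub_succ_le_of_antitone hM hM0 ha)

lemma card_filter_log_label_eq_le {N : ℕ} {c ρ : ℝ} (hc : 0 < c) (hρ : 0 < ρ)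
    {label M : ℕ → ℕ} {Blue : Finset ℕ} (hlabel_pos : ∀ t ∈ Blue, 1 ≤ label t)
    (hM_mono : ∀ t, M (t + 1) ≤ M t) (hmiss : ∀ t ∈ Blue, M t ≤ N * label t)
    (hprog : ∀ t ∈ Blue, c * label t / ρ ≤ (M t : ℝ) - M (t + 1)) (i : ℕ) :
    (#{t ∈ Blue | Nat.log 2 (label t) = i} : ℝ) ≤ 2 * N * ρ / c := by
  set S := {t ∈ Blue | Nat.log 2 (label t) = i}
  rcases S.eq_empty_or_nonempty with hS | hS
  · rw [hS, card_empty, Nat.cast_zero]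
    positivity
  have hlabel_ge : ∀ t ∈ S, 2 ^ i ≤ label t := fun t ht => by
    rw [mem_filter] at ht
    exact ht.2 ▸ Nat.pow_log_le_self 2 (Nat.one_le_iff_ne_zero.mp (hlabel_pos t ht.1))
  have hprog_class : ∀ t ∈ S, c * 2 ^ i / ρ ≤ (M t : ℝ) - M (t + 1) := fun t ht => by
    refine le_trans ?_ (hprog t (mem_filter.mp ht).1)
    gcongr
    exact_mod_cast hlabel_ge t ht
  have hcard := card_mul_le_of_le_sub_succ (M := fun t => (M t : ℝ)) (a := S.min' hS)
    (antitone_nat_of_succ_le fun t => by exact_mod_cast hM_mono t) (fun t => Nat.cast_nonneg _)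
    (fun t ht => S.min'_le t ht) hprog_class
  have hmiss_first : (M (S.min' hS) : ℝ) ≤ N * 2 ^ (i + 1) := by
    obtain ⟨hfirst, hlog⟩ := mem_filter.mp (S.min'_mem hS)
    have hlabel_lt := hlog ▸ Nat.lt_pow_succ_log_self one_lt_two (label (S.min' hS))
    exact_mod_cast (hmiss _ hfirst).trans (Nat.mul_le_mul_left N hlabel_lt.le)
  calc (#S : ℝ) = #S * (c * 2 ^ i / ρ) * (ρ / (c * 2 ^ i)) := by field_simp
    _ ≤ N * 2 ^ (i + 1) * (ρ / (c * 2 ^ i)) :=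
        mul_le_mul_of_nonneg_right (hcard.trans hmiss_first) (by positivity)
    _ = 2 * N * ρ / c := by field_simp; ring

theorem stmt_19_general (n k : ℕ) (hk : 2 ≤ k) (c : ℝ) (hc : 0 < c)
    (label M : ℕ → ℕ) (Blue : Finset ℕ)
    (hlabel_pos : ∀ t ∈ Blue, 1 ≤ label t)
    (hlabel_le : ∀ t, label t ≤ n)
    (hM_mono : ∀ t, M (t + 1) ≤ M t)
    (hmiss : ∀ t ∈ Blue, M t ≤ (n + k) * label t)
    (hprog : ∀ t ∈ Blue, c * (label t : ℝ) / Real.log k ≤ (M t : ℝ) - (M (t + 1) : ℝ)) :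
    (Blue.card : ℝ) ≤ 2 * (n + k : ℝ) * Real.log k * (Real.logb 2 n + 1) / c := by
  have hlog_k : 0 < Real.log k := Real.log_pos (by exact_mod_cast hk)
  have hclass := card_filter_log_label_eq_le hc hlog_k hlabel_pos hM_mono hmiss hprog
  have hcard : #Blue = ∑ i ∈ range (Nat.log 2 n + 1), #{t ∈ Blue | Nat.log 2 (label t) = i} :=
    card_eq_sum_card_fiberwise fun t _ =>
      mem_range.mpr (Nat.lt_succ_of_le (Nat.log_mono_right (hlabel_le t)))
  calc (#Blue : ℝ) ≤ ∑ _i ∈ range (Nat.log 2 n + 1), 2 * ((n + k : ℕ) : ℝ) * Real.log k / c := by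
        rw [hcard, Nat.cast_sum]
        exact sum_le_sum fun i _ => hclass i
    _ = (Nat.log 2 n + 1) * (2 * (n + k : ℝ) * Real.log k / c) := by
        rw [sum_const, card_range, nsmul_eq_mul]; push_cast; ring
    _ ≤ (Real.logb 2 n + 1) * (2 * (n + k : ℝ) * Real.log k / c) := by
        gcongr
        exact Real.natLog_le_logb n 2
    _ = 2 * (n + k : ℝ) * Real.log k * (Real.logb 2 n + 1) / c := by ring

/-- Counting blue rounds.  `label t` is the number of groups
(maximal sets of nodes with identical token sets) in round `t` and `M t` the total
number of missing (node, token) pairs at the start of round `t`.  Suppose labels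
are non-increasing over time and bounded by `n`, missing pairs never increase, in
every blue round `t` the missing pairs satisfy `M t ≤ (n+k)·label t`, and every
blue round makes progress at least `c·(label t)/log k` (i.e. `M` decreases by at
least that much).  Partitioning the blue rounds into at most `log₂ n + 1` dyadic
label classes, each class contains at most `2(n+k)(log k)/c` blue rounds, so in
total there are at most `2(n+k)·(log k)·(log₂ n + 1)/c = O((n+k) log n log k)`
blue rounds. -/
theorem stmt_19 (n k : ℕ) (hn : 2 ≤ n) (hk : 2 ≤ k) (c : ℝ) (hc : 0 < c)
    (label M : ℕ → ℕ) (Blue : Finset ℕ)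
    (hlabel_mono : ∀ t t' : ℕ, t ≤ t' → label t' ≤ label t)
    (hlabel_pos : ∀ t ∈ Blue, 1 ≤ label t)
    (hlabel_le : ∀ t, label t ≤ n)
    (hM_mono : ∀ t, M (t + 1) ≤ M t)
    (hmiss : ∀ t ∈ Blue, M t ≤ (n + k) * label t)
    (hprog : ∀ t ∈ Blue, c * (label t : ℝ) / Real.log k ≤ (M t : ℝ) - (M (t + 1) : ℝ)) :
    (Blue.card : ℝ) ≤ 2 * (n + k : ℝ) * Real.log k * (Real.logb 2 n + 1) / c :=
  stmt_19_general n k hk c hc label M Blue hlabel_pos hlabel_le hM_mono hmiss hprog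
end
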